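/- arXiv:1410.6643 — 4 statements merged into one kernel-verified Lean document; each statement's English description precedes it below -/
import Mathlib

section
/- Let V, W be finite-dimensional real vector spaces and C ∈ Hom(V ∧ V, W) arbitrary. Define Γ: V × W → Hom(V,W) by Γ(x,y)v = ½ C(x ∧ v). Then the vector subbundle H of T(V × W) given by H_{(x,y)} = graph Γ(x,y) has curvature tensor (in the canonical trivialization) equal to C at every point (x,y) ∈ V × W. -/
/-! Since `Γ` depends linearly on `x` alone, the `∂Γ/∂y` terms vanish and `⟨∂Γ/∂x; f⟩ = ½ C(f ∧ ·)`;
the curvature is then the antisymmetrisation of `½ C`, which is `C` because `C` is alternating. -/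

/-- The local representation of the curvature tensor of the subbundle
`H_{(x,y)} = graph Γ(x,y)`, as an element of `Hom(V × V, W)` (evaluated on the
pair `(f,g)`, corresponding to `f ∧ g`). -/
noncomputable def curvRep {V W : Type*}
    [NormedAddCommGroup V] [NormedSpace ℝ V]
    [NormedAddCommGroup W] [NormedSpace ℝ W]
    (Γ : V × W → (V →L[ℝ] W)) (p : V × W) (f g : V) : W :=
  fderiv ℝ Γ p (f, 0) g - fderiv ℝ Γ p (g, 0) f
    + fderiv ℝ Γ p (0, Γ p f) g - fderiv ℝ Γ p (0, Γ p g) f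

theorem curvRep_of_eq_comp_fst {V W : Type*}
    [NormedAddCommGroup V] [NormedSpace ℝ V]
    [NormedAddCommGroup W] [NormedSpace ℝ W]
    (L : V →L[ℝ] V →L[ℝ] W) (Γ : V × W → (V →L[ℝ] W)) (hΓ : ∀ q, Γ q = L q.1)
    (p : V × W) (f g : V) :
    curvRep Γ p f g = L f g - L g f := by
  have hfderiv : fderiv ℝ Γ p = L.comp (ContinuousLinearMap.fst ℝ V W) := by
    rw [show Γ = L.comp (ContinuousLinearMap.fst ℝ V W) from funext hΓ]
    exact ContinuousLinearMap.fderiv _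
  simp [curvRep, hfderiv]

theorem stmt5_general {V W : Type*}
    [NormedAddCommGroup V] [NormedSpace ℝ V] [FiniteDimensional ℝ V]
    [NormedAddCommGroup W] [NormedSpace ℝ W]
    (C : V →ₗ[ℝ] V →ₗ[ℝ] W) (hC : ∀ v, C v v = 0)
    (Γ : V × W → (V →L[ℝ] W))
    (hΓ : ∀ (p : V × W) (v : V), Γ p v = (1 / 2 : ℝ) • C p.1 v)
    (p : V × W) (f g : V) :
    curvRep Γ p f g = C f g := by
  have hΓL : ∀ q, Γ q = ((1 / 2 : ℝ) • C).toContinuousBilinearMap q.1 := fun q ↦ by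
    ext v
    simp [hΓ]
  rw [curvRep_of_eq_comp_fst _ Γ hΓL p f g]
  have hanti : C g f = -C f g := (LinearMap.IsAlt.neg hC f g).symm
  simp only [LinearMap.toContinuousBilinearMap_apply, LinearMap.smul_apply, hanti]
  module

/-- Given an arbitrary alternating bilinear map `C : V ∧ V → W` on
finite-dimensional spaces, the subbundle `H` of `T(V × W)` defined by
`H_{(x,y)} = graph Γ(x,y)` with `Γ(x,y)v = ½ C(x ∧ v)` has curvature tensor
(in the canonical trivialization) equal to `C` at every point. -/
theorem stmt5 {V W : Type*}
    [NormedAddCommGroup V] [NormedSpace ℝ V] [FiniteDimensional ℝ V]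
    [NormedAddCommGroup W] [NormedSpace ℝ W] [FiniteDimensional ℝ W]
    (C : V →ₗ[ℝ] V →ₗ[ℝ] W) (hC : ∀ v, C v v = 0)
    (Γ : V × W → (V →L[ℝ] W))
    (hΓ : ∀ (p : V × W) (v : V), Γ p v = (1 / 2 : ℝ) • C p.1 v)
    (p : V × W) (f g : V) :
    curvRep Γ p f g = C f g :=
  stmt5_general C hC Γ hΓ p f g
end

section
/- Let V = Re₁ ⊕ Re₂, W = Re₃ ⊕ Re₄, and C ∈ Hom(V ∧ V, W) defined by C(e₁ ∧ e₂) = e₃ (so C is injective). Define Γ(x,y)v = ½C(x ∧ v) and H_{(x,y)} = graph Γ(x,y) in T(V × W) ≅ V × W. Then for each λ ∈ R the hypersurface N_λ = {x₄ = λ} ⊂ V × W satisfies H_{(x,y)} ⊆ T_{(x,y)}N_λ for all (x,y) ∈ N_λ, while the curvature of H equals C (injective) at every point. -/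
/-!
An alternating bilinear map on `ℝ²` is the determinant times its value on `(e₁, e₂)`, so `C`
takes values on the line `ℝe₃`, which is tangent to every `N_λ`, and it vanishes exactly on
linearly dependent pairs. Since `Γ` is linear in the point and independent of `y`, its
derivative is `Γ` itself and the vertical terms of the curvature drop out, leaving
`½C(f ∧ g) - ½C(g ∧ f) = C(f ∧ g)`.
-/

lemma LinearMap.IsAlt.apply_eq_det_smul {R N : Type*} [CommRing R] [AddCommGroup N] [Module R N]
    {C : (R × R) →ₗ[R] (R × R) →ₗ[R] N} (hC : C.IsAlt) (u v : R × R) :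
    C u v = (u.1 * v.2 - u.2 * v.1) • C (1, 0) (0, 1) := by
  obtain ⟨a, b⟩ := u
  obtain ⟨c, d⟩ := v
  have hswap : C (0, 1) (1, 0) = -C (1, 0) (0, 1) := (hC.neg _ _).symm
  conv_lhs => rw [show ((a, b) : R × R) = a • (1, 0) + b • (0, 1) by ext <;> simp,
    show ((c, d) : R × R) = c • (1, 0) + d • (0, 1) by ext <;> simp]
  simp only [map_add, map_smul, LinearMap.add_apply, LinearMap.smul_apply, hC.self_eq_zero, hswap]
  module

lemma not_linearIndependent_pair_of_det_eq_zero {K : Type*} [Field K] {u v : K × K}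
    (h : u.1 * v.2 - u.2 * v.1 = 0) : ¬LinearIndependent K ![u, v] := by
  intro hli
  have hrel := LinearIndependent.pair_iff.mp hli
  have hv1 : v.1 = 0 :=
    (hrel v.1 (-u.1) (by ext <;> simp <;> [ring; linear_combination -h])).1
  have hv2 : v.2 = 0 :=
    (hrel v.2 (-u.2) (by ext <;> simp <;> [linear_combination h; ring])).1
  exact hli.ne_zero 1 (Prod.ext hv1 hv2)

lemma curvRep_eq_of_isLinearMap {V W : Type*}
    [NormedAddCommGroup V] [NormedSpace ℝ V] [FiniteDimensional ℝ V]
    [NormedAddCommGroup W] [NormedSpace ℝ W] [FiniteDimensional ℝ W]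
    {Γ : V × W → (V →L[ℝ] W)} (hlin : IsLinearMap ℝ Γ) (hvert : ∀ w, Γ (0, w) = 0)
    (p : V × W) (f g : V) :
    curvRep Γ p f g = Γ (f, 0) g - Γ (g, 0) f := by
  have hderiv : fderiv ℝ Γ p = LinearMap.toContinuousLinearMap (hlin.mk' Γ) :=
    (LinearMap.toContinuousLinearMap (hlin.mk' Γ)).fderiv
  simp [curvRep, hderiv, hvert]

/-- `V = ℝe₁ ⊕ ℝe₂`, `W = ℝe₃ ⊕ ℝe₄`, `C(e₁ ∧ e₂) = e₃` (an injective map on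
`V ∧ V`), `Γ(x,y)v = ½C(x ∧ v)`, `H_{(x,y)} = graph Γ(x,y)`.  Then every
hypersurface `N_λ = {x₄ = λ}` satisfies `H_{(x,y)} ⊆ T_{(x,y)}N_λ` on `N_λ`,
while the curvature of `H` equals `C` (injective) at every point. -/
theorem stmt11
    (C : (ℝ × ℝ) →ₗ[ℝ] (ℝ × ℝ) →ₗ[ℝ] (ℝ × ℝ))
    (hCalt : ∀ v, C v v = 0)
    (hCe : C (1, 0) (0, 1) = ((1 : ℝ), (0 : ℝ)))
    (Γ : (ℝ × ℝ) × (ℝ × ℝ) → ((ℝ × ℝ) →L[ℝ] (ℝ × ℝ)))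
    (hΓ : ∀ p v, Γ p v = (1 / 2 : ℝ) • C p.1 v)
    (H : (ℝ × ℝ) × (ℝ × ℝ) → Submodule ℝ ((ℝ × ℝ) × (ℝ × ℝ)))
    (hH : ∀ p, H p = LinearMap.graph (Γ p).toLinearMap) :
    -- H is tangent to every hypersurface N_λ = {x₄ = λ}
    (∀ (lam : ℝ) (p : (ℝ × ℝ) × (ℝ × ℝ)), p.2.2 = lam →
      ∀ w ∈ H p, w.2.2 = (0 : ℝ)) ∧
    -- the curvature of H equals C at every point
    (∀ (p : (ℝ × ℝ) × (ℝ × ℝ)) (f g : ℝ × ℝ), curvRep Γ p f g = C f g) ∧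
    -- C is injective on V ∧ V
    (∀ u v : ℝ × ℝ, C u v = 0 → ¬ LinearIndependent ℝ ![u, v]) := by
  have hC : C.IsAlt := hCalt
  have hdet : ∀ u v, C u v = (u.1 * v.2 - u.2 * v.1) • ((1 : ℝ), (0 : ℝ)) := by
    simpa only [hCe] using hC.apply_eq_det_smul
  have hlin : IsLinearMap ℝ Γ :=
    { map_add := fun p q ↦ ContinuousLinearMap.ext fun v ↦ by simp [hΓ, smul_add]
      map_smul := fun c p ↦ ContinuousLinearMap.ext fun v ↦ by simp [hΓ, smul_comm c] }
  refine ⟨fun _ p _ w hw ↦ ?_, fun p f g ↦ ?_, fun u v huv ↦ ?_⟩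
  · rw [hH, LinearMap.mem_graph_iff] at hw
    simp [hw, hΓ, hdet]
  · have hvert : ∀ w, Γ (0, w) = 0 := fun w ↦ ContinuousLinearMap.ext fun v ↦ by simp [hΓ]
    rw [curvRep_eq_of_isLinearMap hlin hvert, hΓ, hΓ, ← hC.neg]
    module
  · refine not_linearIndependent_pair_of_det_eq_zero ?_
    simpa [hdet] using huv
end

section
/- Let V = Re₁ ⊕ Re₂ ⊕ Re₃, W = Re₄, and C ∈ Hom(V ∧ V, W) defined by C(e₁∧e₂) = C(e₂∧e₃) = 0, C(e₁∧e₃) = e₄ (so C is surjective). Define Γ(x,y)v = ½C(x∧v) and H_{(x,y)} = graph Γ(x,y). Then for each λ ∈ R the surface N_λ = {x₃ = 0, x₄ = λ} ⊂ V × W satisfies T_{(x,y)}N_λ ⊆ H_{(x,y)} for all (x,y) ∈ N_λ, while the curvature of H equals C (surjective) at every point. -/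
theorem LinearMap.IsAlt.apply_eq_zero_of_mem_span_pair {R M N : Type*} [CommRing R]
    [AddCommGroup M] [Module R M] [AddCommGroup N] [Module R N]
    {C : M →ₗ[R] M →ₗ[R] N} (hC : C.IsAlt) {u v x y : M} (huv : C u v = 0)
    (hx : x ∈ Submodule.span R {u, v}) (hy : y ∈ Submodule.span R {u, v}) : C x y = 0 := by
  obtain ⟨a, b, rfl⟩ := Submodule.mem_span_pair.mp hx
  obtain ⟨c, d, rfl⟩ := Submodule.mem_span_pair.mp hy
  have hvu : C v u = 0 := by rw [← hC.neg, huv, neg_zero]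
  simp [hC.self_eq_zero, huv, hvu]

theorem curvRep_comp_fst {V W : Type*} [NormedAddCommGroup V] [NormedSpace ℝ V]
    [NormedAddCommGroup W] [NormedSpace ℝ W] (L : V →L[ℝ] V →L[ℝ] W) (p : V × W) (f g : V) :
    curvRep (fun q => L q.1) p f g = L f g - L g f := by
  have hfderiv : fderiv ℝ (fun q : V × W => L q.1) p = L.comp (ContinuousLinearMap.fst ℝ V W) :=
    (L.comp (ContinuousLinearMap.fst ℝ V W)).fderiv
  simp [curvRep, hfderiv]

theorem mem_span_e₁_e₂ {x : ℝ × ℝ × ℝ} (hx : x.2.2 = 0) :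
    x ∈ Submodule.span ℝ {((1 : ℝ), (0 : ℝ), (0 : ℝ)), (0, 1, 0)} :=
  Submodule.mem_span_pair.mpr ⟨x.1, x.2.1, by ext <;> simp [hx]⟩

theorem stmt12_general
    (C : (ℝ × ℝ × ℝ) →ₗ[ℝ] (ℝ × ℝ × ℝ) →ₗ[ℝ] ℝ)
    (hCalt : ∀ v, C v v = 0)
    (hC12 : C (1, 0, 0) (0, 1, 0) = 0)
    (hC13 : C (1, 0, 0) (0, 0, 1) = 1)
    (Γ : (ℝ × ℝ × ℝ) × ℝ → ((ℝ × ℝ × ℝ) →L[ℝ] ℝ))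
    (hΓ : ∀ p v, Γ p v = (1 / 2 : ℝ) • C p.1 v)
    (H : (ℝ × ℝ × ℝ) × ℝ → Submodule ℝ ((ℝ × ℝ × ℝ) × ℝ))
    (hH : ∀ p, H p = LinearMap.graph (Γ p).toLinearMap) :
    -- every surface N_λ = {x₃ = 0, x₄ = λ} is tangent to H
    (∀ (lam : ℝ) (p : (ℝ × ℝ × ℝ) × ℝ), p.1.2.2 = 0 → p.2 = lam →
      ∀ w : (ℝ × ℝ × ℝ) × ℝ, w.1.2.2 = 0 → w.2 = 0 → w ∈ H p) ∧
    -- the curvature of H equals C at every point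
    (∀ (p : (ℝ × ℝ × ℝ) × ℝ) (f g : ℝ × ℝ × ℝ), curvRep Γ p f g = C f g) ∧
    -- C is surjective onto W
    (∀ w : ℝ, ∃ u v : ℝ × ℝ × ℝ, C u v = w) := by
  have hAlt : C.IsAlt := hCalt
  refine ⟨fun _ p hp _ w hw hw₂ => ?_, fun p f g => ?_, fun w => ⟨w • (1, 0, 0), (0, 0, 1), ?_⟩⟩
  · have hC : C p.1 w.1 = 0 :=
      hAlt.apply_eq_zero_of_mem_span_pair hC12 (mem_span_e₁_e₂ hp) (mem_span_e₁_e₂ hw)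
    rw [hH, LinearMap.mem_graph_iff]
    simp [hΓ, hC, hw₂]
  · let L : (ℝ × ℝ × ℝ) →L[ℝ] (ℝ × ℝ × ℝ) →L[ℝ] ℝ :=
      LinearMap.toContinuousLinearMap (LinearMap.toContinuousLinearMap.toLinearMap ∘ₗ C)
    have hΓL : Γ = fun q => ((1 / 2 : ℝ) • L) q.1 := by
      funext q
      refine ContinuousLinearMap.ext fun v => ?_
      simp [L, hΓ]
    rw [hΓL, curvRep_comp_fst]
    simp [L, ← hAlt.neg g f]
    ring
  · rw [map_smul, LinearMap.smul_apply, hC13, smul_eq_mul, mul_one]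

/-- `V = ℝe₁ ⊕ ℝe₂ ⊕ ℝe₃`, `W = ℝe₄`, `C(e₁∧e₂) = C(e₂∧e₃) = 0`,
`C(e₁∧e₃) = e₄` (a surjective map onto `W`), `Γ(x,y)v = ½C(x ∧ v)`,
`H_{(x,y)} = graph Γ(x,y)`.  Then every surface `N_λ = {x₃ = 0, x₄ = λ}`
satisfies `T_{(x,y)}N_λ ⊆ H_{(x,y)}` on `N_λ`, while the curvature of `H`
equals `C` (surjective) at every point. -/
theorem stmt12
    (C : (ℝ × ℝ × ℝ) →ₗ[ℝ] (ℝ × ℝ × ℝ) →ₗ[ℝ] ℝ)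
    (hCalt : ∀ v, C v v = 0)
    (hC12 : C (1, 0, 0) (0, 1, 0) = 0)
    (hC23 : C (0, 1, 0) (0, 0, 1) = 0)
    (hC13 : C (1, 0, 0) (0, 0, 1) = 1)
    (Γ : (ℝ × ℝ × ℝ) × ℝ → ((ℝ × ℝ × ℝ) →L[ℝ] ℝ))
    (hΓ : ∀ p v, Γ p v = (1 / 2 : ℝ) • C p.1 v)
    (H : (ℝ × ℝ × ℝ) × ℝ → Submodule ℝ ((ℝ × ℝ × ℝ) × ℝ))
    (hH : ∀ p, H p = LinearMap.graph (Γ p).toLinearMap) :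
    -- every surface N_λ = {x₃ = 0, x₄ = λ} is tangent to H
    (∀ (lam : ℝ) (p : (ℝ × ℝ × ℝ) × ℝ), p.1.2.2 = 0 → p.2 = lam →
      ∀ w : (ℝ × ℝ × ℝ) × ℝ, w.1.2.2 = 0 → w.2 = 0 → w ∈ H p) ∧
    -- the curvature of H equals C at every point
    (∀ (p : (ℝ × ℝ × ℝ) × ℝ) (f g : ℝ × ℝ × ℝ), curvRep Γ p f g = C f g) ∧
    -- C is surjective onto W
    (∀ w : ℝ, ∃ u v : ℝ × ℝ × ℝ, C u v = w) :=
  stmt12_general C hCalt hC12 hC13 Γ hΓ H hH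
end

section
/- Let L, V be real vector spaces, G ⊆ L, U ⊆ V open sets, A : U → Hom(V,V) smooth, and X, Y : G → L smooth vector fields on G. For β ∈ C^∞(G,U) define the 'vector fields' on the space of maps: (l(A)·r(X))_β(ζ) = A(β(ζ))·β′(ζ)·X(ζ) and r(Y)_β(ζ) = β′(ζ)·Y(ζ). Then pointwise in β and ζ, the bracket [l(A)·r(X), r(Y)]_β(ζ), computed as ⟨(r(Y))′(β); (l(A)·r(X))_β⟩(ζ) − ⟨(l(A)·r(X))′(β); r(Y)_β⟩(ζ), equals −A(β(ζ))·β′(ζ)·[X,Y](ζ), where [X,Y](ζ) = Y′(ζ)X(ζ) − X′(ζ)Y(ζ). -/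
/-- The Lie bracket `[X,Y](ζ) = Y′(ζ)X(ζ) − X′(ζ)Y(ζ)` of vector fields on an
open subset of `L`. -/
noncomputable def lieG {L : Type*} [NormedAddCommGroup L] [NormedSpace ℝ L]
    (X Y : L → L) : L → L :=
  fun ζ => fderiv ℝ Y ζ (X ζ) - fderiv ℝ X ζ (Y ζ)

/-!
Both terms of the bracket are derivatives along the straight line `t ↦ β + t • h` in the
space of maps, so they reduce to first derivatives of `Z` and `W = β′·Y`. Expanding `Z′` by
the product and chain rules, the terms containing `A′` cancel, and what remains is
`A(β(ζ))` applied to `(β′·Y)′·X − (β′·X)′·Y`. The second derivatives of `β` in this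
difference cancel by the symmetry of `β″`, leaving `β′(ζ)·[X,Y](ζ)`.
-/

open ContinuousLinearMap

section

variable {𝕜 E F G H : Type*} [NontriviallyNormedField 𝕜]
  [NormedAddCommGroup E] [NormedSpace 𝕜 E] [NormedAddCommGroup F] [NormedSpace 𝕜 F]
  [NormedAddCommGroup G] [NormedSpace 𝕜 G] [NormedAddCommGroup H] [NormedSpace 𝕜 H]
  {f g : E → F} {x : E}

theorem fderiv_add_smul (hf : DifferentiableAt 𝕜 f x) (hg : DifferentiableAt 𝕜 g x) (t : 𝕜) :
    fderiv 𝕜 (fun ξ => f ξ + t • g ξ) x = fderiv 𝕜 f x + t • fderiv 𝕜 g x :=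
  (hf.hasFDerivAt.add (hg.hasFDerivAt.const_smul t)).fderiv

theorem hasDerivAt_add_smul (a b : F) : HasDerivAt (fun t : 𝕜 => a + t • b) b 0 := by
  simpa using ((hasDerivAt_id (0 : 𝕜)).smul_const b).const_add a

theorem deriv_fderiv_add_smul_apply (hf : DifferentiableAt 𝕜 f x)
    (hg : DifferentiableAt 𝕜 g x) (v : E) :
    deriv (fun t : 𝕜 => fderiv 𝕜 (fun ξ => f ξ + t • g ξ) x v) 0 = fderiv 𝕜 g x v := by
  simp only [fderiv_add_smul hf hg, add_apply, smul_apply]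
  exact (hasDerivAt_add_smul _ _).deriv

theorem hasDerivAt_clm_apply_add_smul {A : F → G →L[𝕜] H} {c : F}
    (hA : DifferentiableAt 𝕜 A c) (w : F) (a b : G) :
    HasDerivAt (fun t : 𝕜 => A (c + t • w) (a + t • b)) (fderiv 𝕜 A c w a + A c b) 0 := by
  have hAline : HasDerivAt (fun t : 𝕜 => A (c + t • w)) (fderiv 𝕜 A c w) 0 := by
    have hA0 : HasFDerivAt A (fderiv 𝕜 A c) (c + (0 : 𝕜) • w) := by
      simpa using hA.hasFDerivAt
    exact hA0.comp_hasDerivAt 0 (hasDerivAt_add_smul c w)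
  simpa [add_comm] using hAline.clm_apply (hasDerivAt_add_smul a b)

theorem deriv_clm_apply_fderiv_add_smul_apply {A : F → F →L[𝕜] H}
    (hA : DifferentiableAt 𝕜 A (f x)) (hf : DifferentiableAt 𝕜 f x)
    (hg : DifferentiableAt 𝕜 g x) (v : E) :
    deriv (fun t : 𝕜 => A (f x + t • g x) (fderiv 𝕜 (fun ξ => f ξ + t • g ξ) x v)) 0
      = fderiv 𝕜 A (f x) (g x) (fderiv 𝕜 f x v) + A (f x) (fderiv 𝕜 g x v) := by
  simp only [fderiv_add_smul hf hg, add_apply, smul_apply]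
  exact (hasDerivAt_clm_apply_add_smul hA _ _ _).deriv

theorem fderiv_clm_comp_apply {A : F → G →L[𝕜] H} {β : E → F} {u : E → G}
    (hA : DifferentiableAt 𝕜 A (β x)) (hβ : DifferentiableAt 𝕜 β x)
    (hu : DifferentiableAt 𝕜 u x) (v : E) :
    fderiv 𝕜 (fun ξ => A (β ξ) (u ξ)) x v
      = fderiv 𝕜 A (β x) (fderiv 𝕜 β x v) (u x) + A (β x) (fderiv 𝕜 u x v) := by
  have hAβ : DifferentiableAt 𝕜 (fun ξ => A (β ξ)) x := hA.comp x hβ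
  rw [fderiv_clm_apply hAβ hu, add_comm]
  simp [fderiv_fun_comp x hA hβ]

end

theorem fderiv_fderiv_apply_sub_eq_fderiv_lieG {L V : Type*}
    [NormedAddCommGroup L] [NormedSpace ℝ L] [NormedAddCommGroup V] [NormedSpace ℝ V]
    {β : L → V} {X Y : L → L} {ζ : L} (hβ : ContDiffAt ℝ 2 β ζ)
    (hX : DifferentiableAt ℝ X ζ) (hY : DifferentiableAt ℝ Y ζ) :
    fderiv ℝ (fun ξ => fderiv ℝ β ξ (Y ξ)) ζ (X ζ)
      - fderiv ℝ (fun ξ => fderiv ℝ β ξ (X ξ)) ζ (Y ζ) = fderiv ℝ β ζ (lieG X Y ζ) := by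
  have hβ' : DifferentiableAt ℝ (fderiv ℝ β) ζ :=
    (hβ.fderiv_right (m := 1) le_rfl).differentiableAt one_ne_zero
  have hsymm : fderiv ℝ (fderiv ℝ β) ζ (X ζ) (Y ζ) = fderiv ℝ (fderiv ℝ β) ζ (Y ζ) (X ζ) :=
    hβ.isSymmSndFDerivAt (by simp) _ _
  rw [fderiv_clm_apply hβ' hY, fderiv_clm_apply hβ' hX, lieG]
  simp only [add_apply, flip_apply, coe_comp, Function.comp_apply, map_sub, hsymm]
  abel

theorem stmt18_general {L V : Type*}
    [NormedAddCommGroup L] [NormedSpace ℝ L]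
    [NormedAddCommGroup V] [NormedSpace ℝ V]
    (G : Set L) (U : Set V) (hU : IsOpen U)
    (A : V → (V →L[ℝ] V)) (hA : ContDiffOn ℝ (⊤ : ℕ∞) A U)
    (X Y : L → L)
    (hX : ContDiff ℝ (⊤ : ℕ∞) X) (hY : ContDiff ℝ (⊤ : ℕ∞) Y)
    (β : L → V) (hβ : ContDiff ℝ (⊤ : ℕ∞) β) (hβU : Set.MapsTo β G U)
    -- the two vector fields on the manifold of maps, evaluated at β:
    (Z W : L → V)
    (hZ : Z = fun ζ => A (β ζ) (fderiv ℝ β ζ (X ζ)))   -- Z = (l(A)·r(X))_β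
    (hW : W = fun ζ => fderiv ℝ β ζ (Y ζ))              -- W = r(Y)_β
    (ζ : L) (hζ : ζ ∈ G) :
    -- ⟨(r(Y))′(β); Z⟩(ζ) − ⟨(l(A)·r(X))′(β); W⟩(ζ) = −A(β(ζ))·β′(ζ)·[X,Y](ζ)
    deriv (fun t : ℝ => fderiv ℝ (fun ξ => β ξ + t • Z ξ) ζ (Y ζ)) 0
      - deriv (fun t : ℝ =>
          A (β ζ + t • W ζ) (fderiv ℝ (fun ξ => β ξ + t • W ξ) ζ (X ζ))) 0
      = -(A (β ζ) (fderiv ℝ β ζ (lieG X Y ζ))) := by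
  have hAβ : DifferentiableAt ℝ A (β ζ) :=
    (hA.differentiableOn (by simp)).differentiableAt (hU.mem_nhds (hβU hζ))
  have hβ2 : ContDiff ℝ 2 β := hβ.of_le (WithTop.coe_le_coe.mpr le_top)
  have hβ' : Differentiable ℝ (fderiv ℝ β) :=
    (hβ2.fderiv_right (m := 1) le_rfl).differentiable one_ne_zero
  have hXd := hX.differentiable (by simp)
  have hYd := hY.differentiable (by simp)
  have hβd := hβ2.differentiable (by simp)
  have hβX : DifferentiableAt ℝ (fun ξ => fderiv ℝ β ξ (X ξ)) ζ := (hβ' ζ).clm_apply (hXd ζ)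
  have hWd : DifferentiableAt ℝ W ζ := hW ▸ (hβ' ζ).clm_apply (hYd ζ)
  have hZd : DifferentiableAt ℝ Z ζ := hZ ▸ (hAβ.comp ζ (hβd ζ)).clm_apply hβX
  rw [deriv_fderiv_add_smul_apply (hβd ζ) hZd,
    deriv_clm_apply_fderiv_add_smul_apply hAβ (hβd ζ) hWd, hZ,
    fderiv_clm_comp_apply hAβ (hβd ζ) hβX, hW,
    ← fderiv_fderiv_apply_sub_eq_fderiv_lieG hβ2.contDiffAt (hXd ζ) (hYd ζ)]
  simp only [map_sub]
  abel

/-- For `A : U → Hom(V,V)`, `X, Y : G → L` smooth and `β : G → U` smooth, the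
bracket `[ l(A)·r(X), r(Y) ]` of the vector fields
`(l(A)·r(X))_β(ζ) = A(β(ζ))·β′(ζ)·X(ζ)` and `r(Y)_β(ζ) = β′(ζ)·Y(ζ)` on the
space of maps, computed pointwise as
`⟨(r(Y))′(β); (l(A)·r(X))_β⟩(ζ) − ⟨(l(A)·r(X))′(β); r(Y)_β⟩(ζ)`
(directional derivatives in the map variable `β`), equals
`−A(β(ζ))·β′(ζ)·[X,Y](ζ)`. -/
theorem stmt18 {L V : Type*}
    [NormedAddCommGroup L] [NormedSpace ℝ L]
    [NormedAddCommGroup V] [NormedSpace ℝ V]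
    (G : Set L) (hG : IsOpen G) (U : Set V) (hU : IsOpen U)
    (A : V → (V →L[ℝ] V)) (hA : ContDiffOn ℝ (⊤ : ℕ∞) A U)
    (X Y : L → L)
    (hX : ContDiff ℝ (⊤ : ℕ∞) X) (hY : ContDiff ℝ (⊤ : ℕ∞) Y)
    (β : L → V) (hβ : ContDiff ℝ (⊤ : ℕ∞) β) (hβU : Set.MapsTo β G U)
    -- the two vector fields on the manifold of maps, evaluated at β:
    (Z W : L → V)
    (hZ : Z = fun ζ => A (β ζ) (fderiv ℝ β ζ (X ζ)))   -- Z = (l(A)·r(X))_β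
    (hW : W = fun ζ => fderiv ℝ β ζ (Y ζ))              -- W = r(Y)_β
    (ζ : L) (hζ : ζ ∈ G) :
    -- ⟨(r(Y))′(β); Z⟩(ζ) − ⟨(l(A)·r(X))′(β); W⟩(ζ) = −A(β(ζ))·β′(ζ)·[X,Y](ζ)
    deriv (fun t : ℝ => fderiv ℝ (fun ξ => β ξ + t • Z ξ) ζ (Y ζ)) 0
      - deriv (fun t : ℝ =>
          A (β ζ + t • W ζ) (fderiv ℝ (fun ξ => β ξ + t • W ξ) ζ (X ζ))) 0
      = -(A (β ζ) (fderiv ℝ β ζ (lieG X Y ζ))) :=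
  stmt18_general G U hU A hA X Y hX hY β hβ hβU Z W hZ hW ζ hζ
end
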